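/- arXiv:2108.06864 — 3 statements merged into one kernel-verified Lean document; each statement's English description precedes it below -/
import Mathlib

section
/- Let R = ℤ[x_{ij}^{(k)}], let 𝔅 = ℤ[a_{il}^{(k)}, b_{jl}^{(k)} : 1 ≤ l ≤ h], both with their natural derivations, and define the ring homomorphism Q̃_h : R → 𝔅 by x_{ij}^{(k)} ↦ ∂̄^k Σ_{l=1}^h a_{il}^{(0)} b_{jl}^{(0)}. Then Q̃_h commutes with ∂̄^k for all k, and Q̃_h vanishes on the ideal R[h+1] generated by all (h+1)-minors det(x_{u_i v_j}^{(0)}) and their normalized derivatives; hence Q̃_h factors through a ring homomorphism Q_h : R/R[h+1] → 𝔅. -/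
open MvPolynomial

/-- `R = ℤ[x_{ij}^{(k)}]`. -/
abbrev PolyR (p q : ℕ) := MvPolynomial (Fin p × Fin q × ℕ) ℤ

/-- `𝔅 = ℤ[a_{il}^{(k)}, b_{jl}^{(k)} : 1 ≤ l ≤ h]`. -/
abbrev PolyB (p q h : ℕ) :=
  MvPolynomial ((Fin p × Fin h × ℕ) ⊕ (Fin q × Fin h × ℕ)) ℤ

/-- The derivation `∂` on `R` with `∂x_{ij}^{(k)} = (k+1)x_{ij}^{(k+1)}`. -/
noncomputable def derivR (p q : ℕ) : Derivation ℤ (PolyR p q) (PolyR p q) :=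
  mkDerivation ℤ fun v => ((v.2.2 : ℤ) + 1) • X (v.1, v.2.1, v.2.2 + 1)

/-- The derivation on `𝔅`. -/
noncomputable def derivB (p q h : ℕ) :
    Derivation ℤ (PolyB p q h) (PolyB p q h) :=
  mkDerivation ℤ fun v =>
    match v with
    | .inl (i, l, k) => ((k : ℤ) + 1) • X (.inl (i, l, k + 1))
    | .inr (j, l, k) => ((k : ℤ) + 1) • X (.inr (j, l, k + 1))

/-- `X_{ij}^{(k)} = ∂̄^k Σ_{l=1}^h a_{il}^{(0)} b_{jl}^{(0)}
  = Σ_l Σ_{k1+k2=k} a_{il}^{(k1)} b_{jl}^{(k2)}`. -/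
noncomputable def Xgen (p q h : ℕ) (i : Fin p) (j : Fin q) (k : ℕ) : PolyB p q h :=
  ∑ l : Fin h, ∑ m ∈ Finset.HasAntidiagonal.antidiagonal k,
    X (.inl (i, l, m.1)) * X (.inr (j, l, m.2))

/-- The ring homomorphism `Q̃_h : R → 𝔅`, `x_{ij}^{(k)} ↦ X_{ij}^{(k)}`. -/
noncomputable def Qtilde (p q h : ℕ) : PolyR p q →ₐ[ℤ] PolyB p q h :=
  aeval fun v => Xgen p q h v.1 v.2.1 v.2.2

/-- The ideal `R[m]` of `R` generated by all `m`-minors of `(x_{ij}^{(0)})` together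
with all their normalized derivatives `∂̄^n` (characterized by `n! • g = ∂^n B`). -/
noncomputable def minorIdeal (p q m : ℕ) : Ideal (PolyR p q) :=
  Ideal.span {g | ∃ (n : ℕ) (u : Fin m → Fin p) (v : Fin m → Fin q),
    StrictMono u ∧ StrictMono v ∧
    (n.factorial : ℤ) • g =
      (⇑(derivR p q))^[n]
        (Matrix.det (Matrix.of fun a b : Fin m => (X (u a, v b, 0) : PolyR p q)))}

/-! Both `Q̃_h ∘ ∂` and `∂ ∘ Q̃_h` are derivations along `Q̃_h`, so they agree once they agree on
the variables `x_{ij}^{(k)}`, where this is the Leibniz rule for the sums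
`Σ_{k₁+k₂=k} a^{(k₁)} b^{(k₂)}`. The matrix `Q̃_h (x_{ij}^{(0)})` is the product of the
`p × h` matrix `(a_{il}^{(0)})` with the `h × q` matrix `(b_{jl}^{(0)})ᵀ`, so its
`(h+1)`-minors vanish; since `Q̃_h` commutes with `∂^n` and `𝔅` is torsion-free, so do
their normalized derivatives. -/

theorem Finset.Nat.sum_antidiagonal_leibniz {S : Type*} [NonUnitalNonAssocRing S]
    (f g : ℕ → S) (k : ℕ) :
    ∑ m ∈ antidiagonal k,
      (((m.2 : ℤ) + 1) • (f m.1 * g (m.2 + 1)) + ((m.1 : ℤ) + 1) • (f (m.1 + 1) * g m.2))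
    = ((k : ℤ) + 1) • ∑ m ∈ antidiagonal (k + 1), f m.1 * g m.2 := by
  have shift_fst : ∑ m ∈ antidiagonal (k + 1), (m.1 : ℤ) • (f m.1 * g m.2)
      = ∑ m ∈ antidiagonal k, ((m.1 : ℤ) + 1) • (f (m.1 + 1) * g m.2) := by
    rw [Finset.Nat.antidiagonal_succ, Finset.sum_cons, Finset.sum_map]
    simp
  have shift_snd : ∑ m ∈ antidiagonal (k + 1), (m.2 : ℤ) • (f m.1 * g m.2)
      = ∑ m ∈ antidiagonal k, ((m.2 : ℤ) + 1) • (f m.1 * g (m.2 + 1)) := by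
    rw [Finset.Nat.antidiagonal_succ', Finset.sum_cons, Finset.sum_map]
    simp
  rw [Finset.sum_add_distrib, ← shift_fst, ← shift_snd, Finset.smul_sum,
    ← Finset.sum_add_distrib]
  refine Finset.sum_congr rfl fun m hm => ?_
  have hsum := Finset.HasAntidiagonal.mem_antidiagonal.mp hm
  rw [← add_smul]
  congr 1
  omega

theorem MvPolynomial.semiconj_derivation_of_X {σ R A : Type*} [CommSemiring R]
    [CommSemiring A] [Algebra R A] (φ : MvPolynomial σ R →ₐ[R] A)
    (D : Derivation R (MvPolynomial σ R) (MvPolynomial σ R)) (D' : Derivation R A A)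
    (hX : ∀ v, φ (D (X v)) = D' (φ (X v))) :
    Function.Semiconj φ D D' := by
  intro a
  induction a using MvPolynomial.induction_on with
  | C r => simp only [← algebraMap_eq, Derivation.map_algebraMap, map_zero, AlgHom.commutes]
  | add f g hf hg => simp only [map_add, hf, hg]
  | mul_X f v hf => simp only [Derivation.leibniz, smul_eq_mul, map_add, map_mul, hf, hX]

theorem Matrix.det_mul_eq_zero_of_card_lt {m n S : Type*} [Fintype m] [Fintype n]
    [DecidableEq n] [CommRing S] (A : Matrix n m S) (B : Matrix m n S)
    (hcard : Fintype.card m < Fintype.card n) : (A * B).det = 0 := by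
  obtain ⟨k, hk⟩ := Nat.exists_eq_add_of_lt hcard
  have e : m ⊕ Fin (k + 1) ≃ n := Fintype.equivOfCardEq (by simp [hk, add_assoc])
  -- Pad `A` with zero columns and `B` with zero rows to square matrices.
  have hpad :
      A * B = (fromCols A 0).submatrix id e.symm * (fromRows B 0).submatrix e.symm id := by
    rw [submatrix_mul_equiv, fromCols_mul_fromRows, Matrix.zero_mul, add_zero, submatrix_id_id]
  rw [hpad, det_mul, det_eq_zero_of_column_eq_zero (e (.inr 0)) (by simp), zero_mul]

theorem derivR_X (p q : ℕ) (v : Fin p × Fin q × ℕ) :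
    derivR p q (X v) = ((v.2.2 : ℤ) + 1) • X (v.1, v.2.1, v.2.2 + 1) :=
  mkDerivation_X ℤ _ v

theorem derivB_X_inl (p q h : ℕ) (i : Fin p) (l : Fin h) (k : ℕ) :
    derivB p q h (X (.inl (i, l, k))) = ((k : ℤ) + 1) • X (.inl (i, l, k + 1)) :=
  mkDerivation_X ℤ _ _

theorem derivB_X_inr (p q h : ℕ) (j : Fin q) (l : Fin h) (k : ℕ) :
    derivB p q h (X (.inr (j, l, k))) = ((k : ℤ) + 1) • X (.inr (j, l, k + 1)) :=
  mkDerivation_X ℤ _ _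

theorem derivB_Xgen (p q h : ℕ) (i : Fin p) (j : Fin q) (k : ℕ) :
    derivB p q h (Xgen p q h i j k) = ((k : ℤ) + 1) • Xgen p q h i j (k + 1) := by
  rw [Xgen, Xgen, map_sum, Finset.smul_sum]
  refine Finset.sum_congr rfl fun l _ => ?_
  rw [map_sum, ← Finset.Nat.sum_antidiagonal_leibniz (S := PolyB p q h)
    (fun k₁ => X (.inl (i, l, k₁))) (fun k₂ => X (.inr (j, l, k₂)))]
  refine Finset.sum_congr rfl fun m _ => ?_
  rw [Derivation.leibniz, derivB_X_inl, derivB_X_inr, smul_eq_mul, smul_eq_mul,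
    mul_smul_comm, mul_smul_comm]
  ring_nf

theorem Qtilde_X (p q h : ℕ) (v : Fin p × Fin q × ℕ) :
    Qtilde p q h (X v) = Xgen p q h v.1 v.2.1 v.2.2 :=
  aeval_X _ v

theorem Qtilde_semiconj_deriv (p q h : ℕ) :
    Function.Semiconj (Qtilde p q h) (derivR p q) (derivB p q h) :=
  semiconj_derivation_of_X _ _ _ fun v => by
    rw [derivR_X, map_zsmul, Qtilde_X, Qtilde_X, derivB_Xgen]

theorem Qtilde_det_minor (p q h : ℕ) (u : Fin (h + 1) → Fin p) (v : Fin (h + 1) → Fin q) :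
    Qtilde p q h (Matrix.of fun a b : Fin (h + 1) => (X (u a, v b, 0) : PolyR p q)).det = 0 := by
  have hfactor : (Matrix.of fun a b : Fin (h + 1) => (X (u a, v b, 0) : PolyR p q)).map
        (Qtilde p q h) =
      (Matrix.of fun a l => X (.inl (u a, l, 0)) :
          Matrix (Fin (h + 1)) (Fin h) (PolyB p q h)) *
        (Matrix.of fun l b => X (.inr (v b, l, 0)) :
          Matrix (Fin h) (Fin (h + 1)) (PolyB p q h)) := by
    refine Matrix.ext fun a b => ?_
    simp [Matrix.mul_apply, Qtilde_X, Xgen]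
  rw [AlgHom.map_det, AlgHom.mapMatrix_apply, hfactor,
    Matrix.det_mul_eq_zero_of_card_lt _ _ (by simp)]

theorem minorIdeal_le_ker_Qtilde (p q h : ℕ) :
    minorIdeal p q (h + 1) ≤ RingHom.ker (Qtilde p q h) := by
  rw [minorIdeal, Ideal.span_le]
  rintro g ⟨n, u, v, -, -, hg⟩
  have : (n.factorial : ℤ) • Qtilde p q h g = 0 := by
    rw [← map_zsmul, hg, ((Qtilde_semiconj_deriv p q h).iterate_right n).eq, Qtilde_det_minor,
      iterate_map_zero]
  exact (smul_eq_zero.mp this).resolve_left (by exact_mod_cast n.factorial_ne_zero)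

/-- `Q̃_h` commutes with the (iterated, hence normalized) derivations, vanishes on the
ideal `R[h+1]`, and hence factors through a ring homomorphism
`Q_h : R/R[h+1] → 𝔅`. -/
theorem Qtilde_commutes_and_factors (p q h : ℕ) :
    (∀ (k : ℕ) (a : PolyR p q),
        Qtilde p q h ((⇑(derivR p q))^[k] a) = (⇑(derivB p q h))^[k] (Qtilde p q h a)) ∧
    (∀ g ∈ minorIdeal p q (h + 1), Qtilde p q h g = 0) ∧
    ∃ Qh : (PolyR p q ⧸ minorIdeal p q (h + 1)) →+* PolyB p q h,
      ∀ a : PolyR p q, Qh (Ideal.Quotient.mk (minorIdeal p q (h + 1)) a)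
        = Qtilde p q h a :=
  have hker := minorIdeal_le_ker_Qtilde p q h
  ⟨fun k => ((Qtilde_semiconj_deriv p q h).iterate_right k).eq, hker,
    Ideal.Quotient.lift _ (Qtilde p q h).toRingHom hker,
    fun _ => Ideal.Quotient.lift_mk _ _ hker⟩
end

section
/- (Lemma 6.2) With S = {1,…,s}, row-derivations ∂_T = Σ_{l∈T} ∂_l and column-derivations (∂_*)_K = Σ_{l∈K} (∂_*)_l on ℤ[x_{ij}^{(k)} : i,j ∈ S], for subsets T, J, K ⊂ S with J ∩ T = ∅ and 0 ≤ a ≤ l: Σ_{I : |I|=|K|, J ⊂ I ⊂ S∖T} ε(I,K) ∂̄^a 𝒜(I,K) · ∂̄_T^{l−a} 𝒜(S∖I, S∖K) lies in the ideal 𝔯[s − |J| − |T| − a]. -/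
open MvPolynomial

/-- `ℤ[x_{ij}^{(k)} : i,j ∈ S = {1,…,s}, k ≥ 0]`. -/
abbrev PolyS (s : ℕ) := MvPolynomial (Fin s × Fin s × ℕ) ℤ

/-- The full derivation `∂` with `∂x_{ij}^{(k)} = (k+1)x_{ij}^{(k+1)}`. -/
noncomputable def dFull (s : ℕ) : Derivation ℤ (PolyS s) (PolyS s) :=
  mkDerivation ℤ fun v => ((v.2.2 : ℤ) + 1) • X (v.1, v.2.1, v.2.2 + 1)

/-- The row derivation `∂_l`, acting only on row `l`:
`∂_l x_{ij}^{(k)} = δ_i^l (k+1) x_{ij}^{(k+1)}`. -/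
noncomputable def dRow (s : ℕ) (l : Fin s) : Derivation ℤ (PolyS s) (PolyS s) :=
  mkDerivation ℤ fun v =>
    if v.1 = l then ((v.2.2 : ℤ) + 1) • X (v.1, v.2.1, v.2.2 + 1) else 0

/-- The column derivation `(∂_*)_l`, acting only on column `l`. -/
noncomputable def dCol (s : ℕ) (l : Fin s) : Derivation ℤ (PolyS s) (PolyS s) :=
  mkDerivation ℤ fun v =>
    if v.2.1 = l then ((v.2.2 : ℤ) + 1) • X (v.1, v.2.1, v.2.2 + 1) else 0

/-- `∂_N = Σ_{l ∈ N} ∂_l`. -/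
noncomputable def dRowSet (s : ℕ) (N : Finset (Fin s)) :
    Derivation ℤ (PolyS s) (PolyS s) :=
  ∑ l ∈ N, dRow s l

/-- `(∂_*)_N = Σ_{l ∈ N} (∂_*)_l`. -/
noncomputable def dColSet (s : ℕ) (N : Finset (Fin s)) :
    Derivation ℤ (PolyS s) (PolyS s) :=
  ∑ l ∈ N, dCol s l

/-- The minor `𝒜(I,K) = det (x_{ij}^{(0)})_{i∈I, j∈K}`, rows and columns taken in
increasing order (and `0` if `|I| ≠ |K|`). -/
noncomputable def minorA (s : ℕ) (I K : Finset (Fin s)) : PolyS s :=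
  if h : K.card = I.card then
    (Matrix.of fun a b : Fin I.card =>
      (X ((I.orderIsoOfFin rfl a : Fin s), (K.orderIsoOfFin h b : Fin s), 0) :
        PolyS s)).det
  else 0

/-- `ε(I,K) = (−1)^{Σ_{i∈I} i + Σ_{j∈K} j}` (indices counted `1,…,s`). -/
def epsSign (s : ℕ) (I K : Finset (Fin s)) : ℤ :=
  (-1) ^ (∑ i ∈ I, ((i : ℕ) + 1) + ∑ j ∈ K, ((j : ℕ) + 1))

/-- The ideal `𝔯[m]` generated by all `m`-minors and their normalized derivatives
(characterized by `n! • g = ∂^n 𝒜(I,K)`). -/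
noncomputable def minorIdealS (s m : ℕ) : Ideal (PolyS s) :=
  Ideal.span {g | ∃ (n : ℕ) (I K : Finset (Fin s)), I.card = m ∧ K.card = m ∧
    (n.factorial : ℤ) • g = (⇑(dFull s))^[n] (minorA s I K)}

/-!
Normalized derivatives become Taylor coefficients: `taylorRow E` sends `x_{ij}^{(k)}` with `i ∈ E`
to `Σₙ (k+n choose n) x_{ij}^{(k+n)} tⁿ`, and `n! [tⁿ] taylorRow E f = ∂_Eⁿ f`. Put the `t`-Taylor
series of the `x_{ij}` in the columns `j ∈ K` and their `u`-Taylor series along the rows `T` in the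
other columns, with zeros in the rows `T` resp. `J`. By the Laplace expansion along the columns `K`,
the `t^a u^(l-a)`-coefficient of the determinant of this matrix is the sum of the lemma. Outside
the rows `J ∪ T` the matrix agrees modulo `t` with the matrix `(x_{ij})`, whose `k`-minors lie in
`𝔯[k]`; expanding along the rows `J ∪ T` and multilinearly in `t`, each of these rows and each
power of `t` lowers the size of the surviving minors by at most one.
-/

open Finset

namespace Matrix

variable {R : Type*} [CommRing R]

theorem det_add_eq_sum_powerset {n : Type*} [Fintype n] [DecidableEq n] (A B : Matrix n n R) :
    (A + B).det = ∑ S ∈ univ.powerset, (of fun i j => if j ∈ S then A i j else B i j).det := by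
  simp only [det_apply, add_apply, prod_add, smul_sum, of_apply]
  rw [sum_comm]
  refine sum_congr rfl fun S _ => sum_congr rfl fun σ _ => ?_
  rw [prod_ite, filter_mem_eq_inter, univ_inter, filter_not, filter_mem_eq_inter, univ_inter,
    sdiff_eq_filter]

theorem det_submatrix_equiv {ι n : Type*} [Fintype ι] [DecidableEq ι] [Fintype n]
    [DecidableEq n] (e f : ι ≃ n) (A : Matrix n n R) :
    (A.submatrix e f).det = Equiv.Perm.sign (f.symm.trans e) * A.det := by
  have : A.submatrix e f = (A.submatrix (f.symm.trans e) id).submatrix f f := by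
    ext i j
    simp
  rw [this, det_submatrix_equiv_self, det_permute]

section Filtration

variable {𝔉 : ℕ → Ideal R} {t : R}

theorem det_succ_mem_of_dvd_sub_of_mem (h𝔉 : Antitone 𝔉) {n : ℕ}
    (ih : ∀ (A V : Matrix (Fin n) (Fin n) R),
      (∀ k (r c : Fin k → Fin n), (A.submatrix r c).det ∈ 𝔉 k) → ∀ (Rw Cl : Finset (Fin n)),
        (∀ i ∉ Rw, ∀ j ∉ Cl, t ∣ V i j - A i j) → V.det ∈ 𝔉 (n - #Rw - #Cl))
    (A V : Matrix (Fin (n + 1)) (Fin (n + 1)) R)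
    (hA : ∀ k (r c : Fin k → Fin (n + 1)), (A.submatrix r c).det ∈ 𝔉 k)
    (Rw Cl : Finset (Fin (n + 1))) (hV : ∀ i ∉ Rw, ∀ j ∉ Cl, t ∣ V i j - A i j)
    {r : Fin (n + 1)} (hr : r ∈ Rw) : V.det ∈ 𝔉 (n + 1 - #Rw - #Cl) := by
  rw [det_succ_row V r]
  refine Ideal.sum_mem _ fun j _ => Ideal.mul_mem_left _ _ ?_
  have hRw : #(Rw.preimage r.succAbove Fin.succAbove_right_injective.injOn) + 1 ≤ #Rw := by
    rw [← card_erase_add_one hr, add_le_add_iff_right]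
    exact card_le_card_of_injOn r.succAbove
      (fun i hi => mem_erase.mpr ⟨Fin.succAbove_ne r i, mem_preimage.mp hi⟩)
      Fin.succAbove_right_injective.injOn
  have hCl : #(Cl.preimage j.succAbove Fin.succAbove_right_injective.injOn) ≤ #Cl :=
    card_le_card_of_injOn j.succAbove (fun i hi => mem_preimage.mp hi)
      Fin.succAbove_right_injective.injOn
  refine h𝔉 (by omega) (ih (A.submatrix r.succAbove j.succAbove) _ (fun k r' c' => ?_) _ _
    fun i hi i' hi' => hV _ (fun h => hi (mem_preimage.mpr h)) _
      (fun h => hi' (mem_preimage.mpr h)))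
  rw [submatrix_submatrix]
  exact hA k _ _

/-- Expanding `det (A + t • B)` multilinearly in the columns, a term taking `c` columns from `t • B`
carries `t ^ c`, which pays for the `c` arbitrary columns of the remaining determinant. -/
theorem det_mem_of_forall_dvd_sub (h𝔉 : Antitone 𝔉) (ht : ∀ m, ∀ x ∈ 𝔉 m, t * x ∈ 𝔉 (m + 1)) {p : ℕ}
    (A V : Matrix (Fin p) (Fin p) R) (hA : A.det ∈ 𝔉 p)
    (hcol : ∀ (W : Matrix (Fin p) (Fin p) R) (Cl : Finset (Fin p)), Cl.Nonempty →
      (∀ i, ∀ j ∉ Cl, W i j = A i j) → W.det ∈ 𝔉 (p - #Cl))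
    (hV : ∀ i j, t ∣ V i j - A i j) : V.det ∈ 𝔉 p := by
  have pow_mul_mem : ∀ k m, ∀ x ∈ 𝔉 m, t ^ k * x ∈ 𝔉 (m + k) := by
    intro k
    induction k with
    | zero => simp
    | succ k ihk => exact fun m x hx => by rw [pow_succ', mul_assoc]; exact ht _ _ (ihk m x hx)
  choose B hB using hV
  have hAB : V = A + t • of B := by
    ext i j
    simp [← hB]
  rw [hAB, det_add_eq_sum_powerset]
  refine Ideal.sum_mem _ fun S _ => ?_
  by_cases hS : S = univ
  · subst hS
    convert hA using 2
    ext i j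
    simp
  have hmix : (of fun i j => if j ∈ S then A i j else (t • of B) i j) =
      of fun i j =>
        (if j ∈ S then 1 else t) * (of fun i j => if j ∈ S then A i j else B i j) i j := by
    ext i j
    simp only [of_apply, smul_apply, smul_eq_mul]
    split_ifs <;> simp
  rw [hmix, det_mul_row, prod_ite, prod_const_one, one_mul, prod_const, filter_not,
    filter_mem_eq_inter, univ_inter, ← compl_eq_univ_sdiff]
  have hSc : Sᶜ.Nonempty := by rwa [nonempty_iff_ne_empty, Ne, compl_eq_empty_iff]
  have hmix_mem := hcol (of fun i j => if j ∈ S then A i j else B i j) Sᶜ hSc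
    fun i j hj => by simp [notMem_compl.mp hj]
  have hcard : #Sᶜ ≤ p := by simpa using card_le_univ Sᶜ
  exact h𝔉 (by omega) (pow_mul_mem _ _ _ hmix_mem)

theorem det_mem_of_dvd_sub (h𝔉 : Antitone 𝔉) (ht : ∀ m, ∀ x ∈ 𝔉 m, t * x ∈ 𝔉 (m + 1)) {p : ℕ}
    (A V : Matrix (Fin p) (Fin p) R) (hA : ∀ k (r c : Fin k → Fin p), (A.submatrix r c).det ∈ 𝔉 k)
    (Rw Cl : Finset (Fin p)) (hV : ∀ i ∉ Rw, ∀ j ∉ Cl, t ∣ V i j - A i j) :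
    V.det ∈ 𝔉 (p - #Rw - #Cl) := by
  induction p with
  | zero => simpa using hA 0 id id
  | succ n ih =>
    have of_nonempty : ∀ (V : Matrix (Fin (n + 1)) (Fin (n + 1)) R) (Rw Cl : Finset (Fin (n + 1))),
        (∀ i ∉ Rw, ∀ j ∉ Cl, t ∣ V i j - A i j) → Rw.Nonempty ∨ Cl.Nonempty →
          V.det ∈ 𝔉 (n + 1 - #Rw - #Cl) := by
      rintro V Rw Cl hV (⟨r, hr⟩ | ⟨c, hc⟩)
      · exact det_succ_mem_of_dvd_sub_of_mem h𝔉 ih A V hA Rw Cl hV hr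
      · rw [← det_transpose, Nat.sub_right_comm]
        refine det_succ_mem_of_dvd_sub_of_mem h𝔉 ih Aᵀ Vᵀ (fun k r c => ?_) Cl Rw
          (fun i hi j hj => hV j hj i hi) hc
        rw [← transpose_submatrix, det_transpose]
        exact hA k c r
    rcases Rw.eq_empty_or_nonempty with rfl | hRw
    · rcases Cl.eq_empty_or_nonempty with rfl | hCl
      · rw [card_empty, Nat.sub_zero, Nat.sub_zero]
        refine det_mem_of_forall_dvd_sub h𝔉 ht A V (by simpa using hA _ id id)
          (fun W Cl hCl hW => ?_) fun i j => hV i (notMem_empty i) j (notMem_empty j)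
        simpa using of_nonempty W ∅ Cl (fun i _ j hj => by simp [hW i j hj]) (Or.inr hCl)
      · exact of_nonempty V _ _ hV (Or.inr hCl)
    · exact of_nonempty V _ _ hV (Or.inl hRw)

end Filtration

end Matrix

namespace PowerSeries

variable {S : Type*} [CommRing S] (𝔞 : ℕ → Ideal S) (h𝔞 : Antitone 𝔞)

def filtration (m : ℕ) : Ideal S⟦X⟧ where
  carrier := {F | ∀ n, coeff n F ∈ 𝔞 (m - n)}
  add_mem' hF hG n := by rw [map_add]; exact add_mem (hF n) (hG n)
  zero_mem' n := by rw [map_zero]; exact zero_mem _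
  smul_mem' c F hF n := by
    rw [smul_eq_mul, coeff_mul]
    refine sum_mem fun p hp => Ideal.mul_mem_left _ _ (h𝔞 ?_ (hF p.2))
    have := Finset.HasAntidiagonal.antidiagonal.snd_le hp
    omega

variable {𝔞 h𝔞}

theorem filtration_antitone : Antitone (filtration 𝔞 h𝔞) :=
  fun _ _ hm _ hF n => h𝔞 (by omega) (hF n)

theorem filtration_mono {𝔟 : ℕ → Ideal S} {h𝔟 : Antitone 𝔟} (h : ∀ k, 𝔞 k ≤ 𝔟 k) (m : ℕ) :
    filtration 𝔞 h𝔞 m ≤ filtration 𝔟 h𝔟 m :=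
  fun _ hF n => h _ (hF n)

theorem X_mul_mem_filtration {m : ℕ} {F : S⟦X⟧} (hF : F ∈ filtration 𝔞 h𝔞 m) :
    X * F ∈ filtration 𝔞 h𝔞 (m + 1) := by
  rintro (_ | n)
  · rw [coeff_zero_X_mul]
    exact zero_mem _
  · rw [coeff_succ_X_mul, Nat.add_sub_add_right]
    exact hF n

theorem C_mem_filtration {m : ℕ} {x : S} (hx : x ∈ 𝔞 m) : C x ∈ filtration 𝔞 h𝔞 m := by
  intro n
  rw [coeff_C]
  split_ifs with hn
  · rwa [hn, Nat.sub_zero]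
  · exact zero_mem _

end PowerSeries

section Minors

variable {R : Type*} [CommRing R] {s : ℕ}

noncomputable def minorDet (M : Matrix (Fin s) (Fin s) R) (I K : Finset (Fin s)) : R :=
  if h : K.card = I.card then (M.submatrix (I.orderEmbOfFin rfl) (K.orderEmbOfFin h)).det else 0

theorem minorDet_eq_det_submatrix (M : Matrix (Fin s) (Fin s) R) {I K : Finset (Fin s)} {k : ℕ}
    (hI : #I = k) (hK : #K = k) :
    minorDet M I K = (M.submatrix (I.orderEmbOfFin hI) (K.orderEmbOfFin hK)).det := by
  subst hI
  rw [minorDet, dif_pos hK]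

theorem RingHom.map_minorDet {S : Type*} [CommRing S] (f : R →+* S) (M : Matrix (Fin s) (Fin s) R)
    (I K : Finset (Fin s)) : f (minorDet M I K) = minorDet (f.mapMatrix M) I K := by
  unfold minorDet
  split_ifs
  · rw [f.map_det]; rfl
  · exact f.map_zero

theorem minorDet_congr {M M' : Matrix (Fin s) (Fin s) R} {I K : Finset (Fin s)}
    (h : ∀ i ∈ I, ∀ j ∈ K, M i j = M' i j) : minorDet M I K = minorDet M' I K := by
  unfold minorDet
  split_ifs
  · congr 1
    ext a b
    exact h _ (orderEmbOfFin_mem _ _ _) _ (orderEmbOfFin_mem _ _ _)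
  · rfl

theorem minorDet_eq_zero_of_row {M : Matrix (Fin s) (Fin s) R} {I K : Finset (Fin s)} {i : Fin s}
    (hi : i ∈ I) (h : ∀ j ∈ K, M i j = 0) : minorDet M I K = 0 := by
  unfold minorDet
  split_ifs
  · have hrow : I.orderEmbOfFin rfl ((I.orderIsoOfFin rfl).symm ⟨i, hi⟩) = i := by
      rw [← coe_orderIsoOfFin_apply, OrderIso.apply_symm_apply]
    refine Matrix.det_eq_zero_of_row_eq_zero ((I.orderIsoOfFin rfl).symm ⟨i, hi⟩) fun b => ?_
    rw [Matrix.submatrix_apply, hrow]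
    exact h _ (orderEmbOfFin_mem _ _ _)
  · rfl

theorem Tuple.comp_sort_eq_orderEmbOfFin {α : Type*} [LinearOrder α] {k : ℕ} {f : Fin k → α}
    (hf : Function.Injective f) (h : #(univ.image f) = k) :
    f ∘ Tuple.sort f = (univ.image f).orderEmbOfFin h :=
  orderEmbOfFin_unique h (fun _ => mem_image_of_mem _ (mem_univ _))
    ((Tuple.monotone_sort f).strictMono_of_injective (hf.comp (Tuple.sort f).injective))

theorem det_submatrix_mem_span_minorDet (M : Matrix (Fin s) (Fin s) R) {k : ℕ}
    (r c : Fin k → Fin s) : (M.submatrix r c).det ∈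
      Ideal.span {x | ∃ I K : Finset (Fin s), #I = k ∧ #K = k ∧ x = minorDet M I K} := by
  by_cases hr : Function.Injective r
  · by_cases hc : Function.Injective c
    · have hI : #(univ.image r) = k := by rw [card_image_of_injective _ hr, card_fin]
      have hK : #(univ.image c) = k := by rw [card_image_of_injective _ hc, card_fin]
      have hsub : M.submatrix r c = ((M.submatrix ((univ.image r).orderEmbOfFin hI)
          ((univ.image c).orderEmbOfFin hK)).submatrix ⇑(Tuple.sort r)⁻¹ id).submatrix id
            ⇑(Tuple.sort c)⁻¹ := by
        rw [← Tuple.comp_sort_eq_orderEmbOfFin hr, ← Tuple.comp_sort_eq_orderEmbOfFin hc]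
        ext i j
        simp
      rw [hsub, Matrix.det_permute', Matrix.det_permute, ← minorDet_eq_det_submatrix]
      exact Ideal.mul_mem_left _ _ (Ideal.mul_mem_left _ _
        (Ideal.subset_span ⟨_, _, hI, hK, rfl⟩))
    · obtain ⟨a, b, hab, hne⟩ : ∃ a b, c a = c b ∧ a ≠ b := by
        simpa [Function.Injective] using hc
      rw [Matrix.det_zero_of_column_eq hne fun i => by simp [hab]]
      exact zero_mem _
  · obtain ⟨a, b, hab, hne⟩ : ∃ a b, r a = r b ∧ a ≠ b := by
      simpa [Function.Injective] using hr
    rw [Matrix.det_zero_of_row_eq hne (funext fun j => by simp [hab])]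
    exact zero_mem _

end Minors

theorem Finset.sum_card_filter_lt_eq_choose_two {α : Type*} [LinearOrder α] (P : Finset α) :
    ∑ y ∈ P, #(P.filter (· < y)) = (#P).choose 2 := by
  induction P using Finset.induction_on_max with
  | empty => simp
  | insert a P ha ih =>
    have haP : a ∉ P := fun h => lt_irrefl a (ha a h)
    rw [sum_insert haP, card_insert_of_notMem haP, Nat.choose_succ_succ', Nat.choose_one_right,
      ← ih, filter_insert, if_neg (lt_irrefl a), filter_true_of_mem ha]
    congr 1
    refine sum_congr rfl fun y hy => ?_
    rw [filter_insert, if_neg (lt_asymm (ha y hy))]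

section Laplace

variable {s : ℕ}

theorem sign_finSumEquivOfFinset {k q : ℕ} (P : Finset (Fin s)) (hk : #P = k) (hq : #Pᶜ = q)
    (hs : k + q = s) :
    Equiv.Perm.sign ((finSumEquivOfFinset hk hq).symm.trans (finSumFinEquiv.trans (finCongr hs)))
      = (-1) ^ (∑ i ∈ P, (i : ℕ) + k.choose 2) := by
  set e := finSumEquivOfFinset hk hq
  set ρ := e.symm.trans (finSumFinEquiv.trans (finCongr hs))
  have hρ_inl : ∀ a, (ρ (P.orderEmbOfFin hk a) : ℕ) = a := fun a => by
    rw [← finSumEquivOfFinset_inl hk hq]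
    simp only [ρ, e, Equiv.trans_apply, Equiv.symm_apply_apply, finSumFinEquiv_apply_left,
      finCongr_apply, Fin.val_cast, Fin.val_castAdd]
  have hρ_inr : ∀ b, (ρ (Pᶜ.orderEmbOfFin hq b) : ℕ) = k + b := fun b => by
    rw [← finSumEquivOfFinset_inr hk hq]
    simp only [ρ, e, Equiv.trans_apply, Equiv.symm_apply_apply, finSumFinEquiv_apply_right,
      finCongr_apply, Fin.val_cast, Fin.val_natAdd]
  have hP : ∀ a, P.orderEmbOfFin hk a ∈ P := orderEmbOfFin_mem P hk
  have hPc : ∀ b, Pᶜ.orderEmbOfFin hq b ∉ P := fun b => mem_compl.mp (orderEmbOfFin_mem Pᶜ hq b)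
  -- `ρ` lists `P` and then `Pᶜ`, both increasingly, so its inversions are the pairs `x < y` with
  -- `x ∉ P`, `y ∈ P`; there are `Σ_{y ∈ P} y - (k choose 2)` of them.
  have hρ : ∀ x y, x < y → (ρ x < ρ y ↔ ¬ (x ∉ P ∧ y ∈ P)) := by
    intro x y hxy
    obtain ⟨z, rfl⟩ := e.surjective x
    obtain ⟨z', rfl⟩ := e.surjective y
    rcases z with a | a <;> rcases z' with b | b <;>
      simp only [e, finSumEquivOfFinset_inl, finSumEquivOfFinset_inr, OrderEmbedding.lt_iff_lt,
        Fin.lt_def, hρ_inl, hρ_inr, hP, hPc, not_true_eq_false, not_false_eq_true, and_true,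
        and_false, iff_true, iff_false, not_lt] at hxy ⊢ <;>
      omega
  have hsum : ∑ i ∈ P, (i : ℕ) = ∑ y ∈ P, #((Iio y).filter (· ∉ P)) + k.choose 2 := by
    rw [← hk, ← sum_card_filter_lt_eq_choose_two, ← sum_add_distrib]
    refine sum_congr rfl fun y _ => ?_
    rw [← Fin.card_Iio y, ← card_filter_add_card_filter_not (· ∉ P)]
    congr 2
    ext x
    simp [and_comm]
  have hrow : ∀ y, ∏ x ∈ Iio y, (if ρ x < ρ y then 1 else -1 : ℤˣ) =
      if y ∈ P then (-1) ^ #((Iio y).filter (· ∉ P)) else 1 := by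
    intro y
    split_ifs with hy
    · rw [← prod_const, prod_filter]
      refine prod_congr rfl fun x hx => ?_
      by_cases hx' : x ∈ P <;> simp [hρ x y (mem_Iio.mp hx), hx', hy]
    · exact prod_eq_one fun x hx => by simp [hρ x y (mem_Iio.mp hx), hy]
  rw [Equiv.Perm.sign_eq_prod_prod_Iio, hsum, add_assoc, ← two_mul, pow_add, pow_mul, neg_one_sq,
    one_pow, mul_one, ← prod_pow_eq_pow_sum]
  rw [prod_congr rfl fun y _ => hrow y, prod_ite_mem, univ_inter]

variable {R : Type*} [CommRing R]

def blockPart (M : Matrix (Fin s) (Fin s) R) (I K : Finset (Fin s)) : Matrix (Fin s) (Fin s) R :=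
  Matrix.of fun i j => if (i ∈ I ↔ j ∈ K) then M i j else 0

theorem det_eq_sum_det_blockPart (M : Matrix (Fin s) (Fin s) R) (K : Finset (Fin s)) :
    M.det = ∑ I ∈ powersetCard #K univ, (blockPart M I K).det := by
  simp only [Matrix.det_apply, blockPart, Matrix.of_apply]
  rw [sum_comm]
  refine sum_congr rfl fun σ _ => ?_
  rw [← smul_sum, sum_eq_single (K.image σ)]
  · simp [σ.injective.mem_finset_image]
  · intro I _ hI
    obtain ⟨j, hj⟩ : ∃ j, ¬(σ j ∈ I ↔ j ∈ K) := by
      by_contra! h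
      refine hI (ext fun x => ?_)
      obtain ⟨j, rfl⟩ := σ.surjective x
      rw [h j, σ.injective.mem_finset_image]
    exact prod_eq_zero (mem_univ j) (if_neg hj)
  · intro h
    exact absurd (mem_powersetCard_univ.mpr (card_image_of_injective _ σ.injective)) h

theorem sign_finSumEquivOfFinset_symm_trans {I K : Finset (Fin s)} (hI : #I = #K)
    (hIc : #Iᶜ = #Kᶜ) :
    ((Equiv.Perm.sign ((finSumEquivOfFinset (rfl : #K = #K) (rfl : #Kᶜ = #Kᶜ)).symm.trans
      (finSumEquivOfFinset hI hIc)) : ℤˣ) : ℤ) = epsSign s I K := by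
  have hs : #K + #Kᶜ = s := by rw [card_add_card_compl, Fintype.card_fin]
  set w := finSumFinEquiv.trans (finCongr hs)
  have hsplit : (finSumEquivOfFinset (rfl : #K = #K) (rfl : #Kᶜ = #Kᶜ)).symm.trans
      (finSumEquivOfFinset hI hIc) =
      ((finSumEquivOfFinset rfl rfl).symm.trans w).trans
        ((finSumEquivOfFinset hI hIc).symm.trans w).symm := by
    ext x
    simp
  rw [hsplit, Equiv.Perm.sign_trans, Equiv.Perm.sign_symm, sign_finSumEquivOfFinset,
    sign_finSumEquivOfFinset, epsSign, sum_add_distrib, sum_add_distrib, sum_const, sum_const,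
    hI]
  push_cast
  rw [← pow_add]
  have parity : ∀ m n : ℕ, (-1 : ℤ) ^ (m + 2 * n) = (-1) ^ m := fun m n => by
    rw [pow_add, pow_mul, neg_one_sq, one_pow, mul_one]
  rw [add_add_add_comm, ← two_mul, parity, add_add_add_comm, ← two_mul, parity]

theorem det_blockPart {M : Matrix (Fin s) (Fin s) R} {I K : Finset (Fin s)} (hI : #I = #K) :
    (blockPart M I K).det = epsSign s I K • (minorDet M I K * minorDet M Iᶜ Kᶜ) := by
  have hIc : #Iᶜ = #Kᶜ := by rw [card_compl, card_compl, hI]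
  set eI := finSumEquivOfFinset hI hIc
  set eK := finSumEquivOfFinset (rfl : #K = #K) (rfl : #Kᶜ = #Kᶜ)
  have hblocks : (blockPart M I K).submatrix eI eK = Matrix.fromBlocks
      (M.submatrix (I.orderEmbOfFin hI) (K.orderEmbOfFin rfl)) 0 0
      (M.submatrix (Iᶜ.orderEmbOfFin hIc) (Kᶜ.orderEmbOfFin rfl)) := by
    have hmem := fun {P : Finset (Fin s)} {k : ℕ} (h : #P = k) a => orderEmbOfFin_mem P h a
    ext (a | a) (b | b) <;>
      simp [blockPart, eI, eK, hmem, mem_compl.mp (hmem _ _)]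
  have hdet := Matrix.det_submatrix_equiv eI eK (blockPart M I K)
  rw [hblocks, Matrix.det_fromBlocks_zero₂₁, ← minorDet_eq_det_submatrix,
    ← minorDet_eq_det_submatrix] at hdet
  rw [← sign_finSumEquivOfFinset_symm_trans hI hIc, hdet, zsmul_eq_mul, ← mul_assoc,
    ← Int.cast_mul, ← Units.val_mul, Int.units_mul_self, Units.val_one, Int.cast_one, one_mul]

theorem det_eq_sum_epsSign_smul_minorDet (M : Matrix (Fin s) (Fin s) R) (K : Finset (Fin s)) :
    M.det = ∑ I ∈ powersetCard #K univ, epsSign s I K • (minorDet M I K * minorDet M Iᶜ Kᶜ) := by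
  rw [det_eq_sum_det_blockPart]
  exact sum_congr rfl fun I hI => det_blockPart (mem_powersetCard_univ.mp hI)

end Laplace

section Taylor

variable {s : ℕ}

theorem dRowSet_X (E : Finset (Fin s)) (v : Fin s × Fin s × ℕ) :
    dRowSet s E (X v) = if v.1 ∈ E then ((v.2.2 : ℤ) + 1) • X (v.1, v.2.1, v.2.2 + 1) else 0 := by
  rw [dRowSet, ← Derivation.coeFnAddMonoidHom_apply, map_sum, Finset.sum_apply]
  simp [dRow, mkDerivation_X]

theorem dFull_eq_dRowSet_univ : dFull s = dRowSet s univ :=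
  derivation_ext fun v => by rw [dFull, mkDerivation_X, dRowSet_X, if_pos (mem_univ _)]

noncomputable def taylorRow (E : Finset (Fin s)) : PolyS s →ₐ[ℤ] PowerSeries (PolyS s) :=
  aeval fun v => if v.1 ∈ E then
      PowerSeries.mk fun n => ((v.2.2 + n).choose n : ℤ) • X (v.1, v.2.1, v.2.2 + n)
    else PowerSeries.C (X v)

theorem constantCoeff_taylorRow (E : Finset (Fin s)) (f : PolyS s) :
    PowerSeries.constantCoeff (taylorRow E f) = f := by
  suffices (PowerSeries.constantCoeff).comp (taylorRow E).toRingHom = RingHom.id _ from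
    RingHom.congr_fun this f
  refine MvPolynomial.ringHom_ext (fun r => by simp) fun v => ?_
  simp only [taylorRow, RingHom.comp_apply, AlgHom.toRingHom_eq_coe, RingHom.coe_coe, aeval_X]
  split_ifs <;> simp [← PowerSeries.coeff_zero_eq_constantCoeff_apply]

theorem taylorRow_dRowSet_X (E : Finset (Fin s)) (v : Fin s × Fin s × ℕ) :
    taylorRow E (dRowSet s E (X v)) = PowerSeries.derivative _ (taylorRow E (X v)) := by
  obtain ⟨i, j, k⟩ := v
  simp only [dRowSet_X, taylorRow, aeval_X]
  split_ifs with h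
  · refine PowerSeries.ext fun n => ?_
    simp only [map_zsmul, aeval_X, if_pos h, PowerSeries.coeff_derivative, PowerSeries.coeff_mk]
    have hchoose : ((k + (n + 1)).choose (n + 1) : ℤ) * (n + 1) =
        (k + 1) * (k + (n + 1)).choose n := by
      have := Nat.choose_succ_right_eq (k + (n + 1)) n
      rw [show k + (n + 1) - n = k + 1 by omega] at this
      exact_mod_cast this.trans (mul_comm _ _)
    rw [show k + 1 + n = k + (n + 1) by omega, smul_smul, ← hchoose]
    simp only [zsmul_eq_mul, Int.cast_mul, Int.cast_natCast, Int.cast_add, Int.cast_one]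
    ring
  · simp

theorem taylorRow_dRowSet (E : Finset (Fin s)) (f : PolyS s) :
    taylorRow E (dRowSet s E f) = PowerSeries.derivative _ (taylorRow E f) := by
  induction f using MvPolynomial.induction_on with
  | C a => simp [← algebraMap_eq]
  | add p q hp hq => rw [map_add, map_add, hp, hq, map_add, map_add]
  | mul_X p v hp =>
    rw [Derivation.leibniz, smul_eq_mul, smul_eq_mul, map_add, map_mul, map_mul, hp, map_mul,
      Derivation.leibniz, smul_eq_mul, smul_eq_mul, taylorRow_dRowSet_X]

theorem factorial_smul_coeff_taylorRow (E : Finset (Fin s)) (n : ℕ) (f : PolyS s) :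
    (n.factorial : ℤ) • PowerSeries.coeff n (taylorRow E f) = (⇑(dRowSet s E))^[n] f := by
  have hsemiconj : Function.Semiconj (taylorRow E) (dRowSet s E) (PowerSeries.derivative _) :=
    taylorRow_dRowSet E
  rw [← constantCoeff_taylorRow E ((⇑(dRowSet s E))^[n] f), hsemiconj.iterate_right n,
    PowerSeries.constantCoeff_iterate_derivative, zsmul_eq_mul, Int.cast_natCast]

end Taylor

section MinorIdeal

variable {s : ℕ}

noncomputable def varMatrix (s : ℕ) : Matrix (Fin s) (Fin s) (PolyS s) :=
  Matrix.of fun i j => X (i, j, 0)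

theorem minorA_eq_minorDet (I K : Finset (Fin s)) : minorA s I K = minorDet (varMatrix s) I K :=
  rfl

theorem coeff_taylorRow_minorA_mem {I K : Finset (Fin s)} {m : ℕ} (hI : #I = m) (hK : #K = m)
    (n : ℕ) : PowerSeries.coeff n (taylorRow univ (minorA s I K)) ∈ minorIdealS s m :=
  Ideal.subset_span ⟨n, I, K, hI, hK, by rw [factorial_smul_coeff_taylorRow, dFull_eq_dRowSet_univ]⟩

theorem coeff_taylorRow_det_submatrix_mem {k : ℕ} (r c : Fin k → Fin s) (n : ℕ) :
    PowerSeries.coeff n (taylorRow univ ((varMatrix s).submatrix r c).det) ∈ minorIdealS s k := by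
  have hle : Ideal.span {x | ∃ I K : Finset (Fin s), #I = k ∧ #K = k ∧
      x = minorDet (varMatrix s) I K} ≤
        (PowerSeries.filtration (fun _ => minorIdealS s k) antitone_const 0).comap
          (taylorRow univ) := by
    rw [Ideal.span_le]
    rintro _ ⟨I, K, hI, hK, rfl⟩ n
    exact coeff_taylorRow_minorA_mem hI hK n
  exact hle (det_submatrix_mem_span_minorDet _ r c) n

theorem det_submatrix_varMatrix_mem {k : ℕ} (r c : Fin k → Fin s) :
    ((varMatrix s).submatrix r c).det ∈ minorIdealS s k := by
  simpa [constantCoeff_taylorRow] using coeff_taylorRow_det_submatrix_mem r c 0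

theorem minorIdealS_succ_le (m : ℕ) : minorIdealS s (m + 1) ≤ minorIdealS s m := by
  rw [minorIdealS, Ideal.span_le]
  rintro g ⟨n, I, K, hI, hK, hg⟩
  have hg' : g = PowerSeries.coeff n (taylorRow univ (minorA s I K)) := by
    refine smul_right_injective (PolyS s) (Int.natCast_ne_zero.mpr n.factorial_ne_zero) ?_
    simp only [hg, factorial_smul_coeff_taylorRow, dFull_eq_dRowSet_univ]
  rw [SetLike.mem_coe, hg', minorA_eq_minorDet, minorDet_eq_det_submatrix _ hI hK,
    Matrix.det_succ_row _ 0, map_sum, map_sum]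
  refine sum_mem fun j _ => ?_
  rw [map_mul]
  exact PowerSeries.coeff_mul_mem_ideal_of_coeff_right_mem_ideal'
    (fun i => by simpa only [Matrix.submatrix_submatrix] using
      coeff_taylorRow_det_submatrix_mem _ _ i) n

theorem minorIdealS_antitone : Antitone (minorIdealS s) :=
  antitone_nat_of_succ_le minorIdealS_succ_le

end MinorIdeal

section TaylorBlockMatrix

variable {s : ℕ}

noncomputable def tTaylor (s : ℕ) : PolyS s →+* PowerSeries (PowerSeries (PolyS s)) :=
  (PowerSeries.map PowerSeries.C).comp (taylorRow univ).toRingHom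

noncomputable def uTaylor (T : Finset (Fin s)) : PolyS s →+* PowerSeries (PowerSeries (PolyS s)) :=
  PowerSeries.C.comp (taylorRow T).toRingHom

theorem coeff_coeff_tTaylor_mul_uTaylor (T : Finset (Fin s)) (f g : PolyS s) (a b : ℕ) :
    PowerSeries.coeff b (PowerSeries.coeff a (tTaylor s f * uTaylor T g)) =
      PowerSeries.coeff a (taylorRow univ f) * PowerSeries.coeff b (taylorRow T g) := by
  simp only [tTaylor, uTaylor, RingHom.comp_apply, AlgHom.toRingHom_eq_coe, RingHom.coe_coe,
    PowerSeries.coeff_mul_C, PowerSeries.coeff_map, PowerSeries.coeff_C_mul]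

theorem constantCoeff_tTaylor (f : PolyS s) :
    PowerSeries.constantCoeff (tTaylor s f) = PowerSeries.C f := by
  rw [← PowerSeries.coeff_zero_eq_constantCoeff_apply, tTaylor, RingHom.comp_apply,
    PowerSeries.coeff_map, AlgHom.toRingHom_eq_coe, RingHom.coe_coe,
    PowerSeries.coeff_zero_eq_constantCoeff_apply, constantCoeff_taylorRow]

theorem uTaylor_X_of_notMem {T : Finset (Fin s)} {v : Fin s × Fin s × ℕ} (hv : v.1 ∉ T) :
    uTaylor T (X v) = PowerSeries.C (PowerSeries.C (X v)) := by
  simp [uTaylor, taylorRow, hv]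

/-- `F ∈ minorFiltration s m` iff `[tᵃ uᵇ] F ∈ 𝔯[m - a]` for all `a, b`, where `t` is the outer
and `u` the inner power series variable. -/
noncomputable def minorFiltration (s m : ℕ) : Ideal (PowerSeries (PowerSeries (PolyS s))) :=
  PowerSeries.filtration
    (fun k => PowerSeries.filtration (fun _ => minorIdealS s k) antitone_const 0)
    (fun _ _ h => PowerSeries.filtration_mono (fun _ => minorIdealS_antitone h) 0) m

theorem minorFiltration_antitone : Antitone (minorFiltration s) :=
  PowerSeries.filtration_antitone

theorem X_mul_mem_minorFiltration {m : ℕ} {F : PowerSeries (PowerSeries (PolyS s))}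
    (hF : F ∈ minorFiltration s m) : PowerSeries.X * F ∈ minorFiltration s (m + 1) :=
  PowerSeries.X_mul_mem_filtration hF

theorem C_C_mem_minorFiltration {m : ℕ} {f : PolyS s} (hf : f ∈ minorIdealS s m) :
    PowerSeries.C (PowerSeries.C f) ∈ minorFiltration s m :=
  PowerSeries.C_mem_filtration (PowerSeries.C_mem_filtration hf)

theorem coeff_coeff_mem_of_mem_minorFiltration {m : ℕ} {F : PowerSeries (PowerSeries (PolyS s))}
    (hF : F ∈ minorFiltration s m) (a b : ℕ) :
    PowerSeries.coeff b (PowerSeries.coeff a F) ∈ minorIdealS s (m - a) :=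
  hF a b

noncomputable def taylorBlockMatrix (T J K : Finset (Fin s)) :
    Matrix (Fin s) (Fin s) (PowerSeries (PowerSeries (PolyS s))) :=
  Matrix.of fun i j =>
    if j ∈ K then (if i ∈ T then 0 else tTaylor s (X (i, j, 0)))
    else (if i ∈ J then 0 else uTaylor T (X (i, j, 0)))

theorem det_taylorBlockMatrix (T J K : Finset (Fin s)) :
    (taylorBlockMatrix T J K).det =
      ∑ I ∈ (powersetCard #K Tᶜ).filter (fun I => J ⊆ I),
        epsSign s I K • (tTaylor s (minorA s I K) * uTaylor T (minorA s Iᶜ Kᶜ)) := by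
  set N := taylorBlockMatrix T J K
  rw [det_eq_sum_epsSign_smul_minorDet N K]
  symm
  refine (sum_congr rfl fun I hI => ?_).trans (sum_subset (fun I hI => ?_) fun I hI hIJ => ?_)
  · obtain ⟨⟨hIT, -⟩, hJI⟩ := mem_filter.mp hI |>.imp_left mem_powersetCard.mp
    rw [minorA_eq_minorDet, minorA_eq_minorDet, RingHom.map_minorDet, RingHom.map_minorDet]
    congr 2
    · refine minorDet_congr fun i hi j hj => ?_
      simp [N, taylorBlockMatrix, varMatrix, hj, mem_compl.mp (hIT hi)]
    · refine minorDet_congr fun i hi j hj => ?_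
      have hiJ : i ∉ J := fun h => mem_compl.mp hi (hJI h)
      simp [N, taylorBlockMatrix, varMatrix, mem_compl.mp hj, hiJ]
  · exact mem_powersetCard_univ.mpr (mem_powersetCard.mp (mem_filter.mp hI).1).2
  · rw [mem_filter, mem_powersetCard, not_and, imp_not_comm] at hIJ
    by_cases hJI : J ⊆ I
    · obtain ⟨i, hiI, hiT⟩ : ∃ i ∈ I, i ∈ T := by
        by_contra! h
        exact hIJ hJI ⟨fun i hi => mem_compl.mpr (h i hi), mem_powersetCard_univ.mp hI⟩
      rw [minorDet_eq_zero_of_row hiI fun j hj => by simp [N, taylorBlockMatrix, hj, hiT],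
        zero_mul, smul_zero]
    · obtain ⟨i, hiJ, hiI⟩ := not_subset.mp hJI
      rw [minorDet_eq_zero_of_row (mem_compl.mpr hiI) fun j hj => by
          simp [N, taylorBlockMatrix, mem_compl.mp hj, hiJ], mul_zero, smul_zero]

theorem det_taylorBlockMatrix_mem {T J : Finset (Fin s)} (hJT : Disjoint J T)
    (K : Finset (Fin s)) :
    (taylorBlockMatrix T J K).det ∈ minorFiltration s (s - #J - #T) := by
  have hmem := Matrix.det_mem_of_dvd_sub minorFiltration_antitone
    (fun _ _ => X_mul_mem_minorFiltration)
    ((PowerSeries.C.comp PowerSeries.C).mapMatrix (varMatrix s)) (taylorBlockMatrix T J K)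
    (fun k r c => ?_) (J ∪ T) ∅ (fun i hi j _ => ?_)
  · rwa [card_empty, Nat.sub_zero, card_union_of_disjoint hJT, ← Nat.sub_sub] at hmem
  · rw [RingHom.mapMatrix_apply, Matrix.submatrix_map, ← RingHom.mapMatrix_apply,
      ← RingHom.map_det]
    exact C_C_mem_minorFiltration (det_submatrix_varMatrix_mem r c)
  · obtain ⟨hiJ, hiT⟩ : i ∉ J ∧ i ∉ T := by simpa [not_or] using hi
    simp only [taylorBlockMatrix, varMatrix, RingHom.mapMatrix_apply, Matrix.map_apply,
      Matrix.of_apply, if_neg hiJ, if_neg hiT, RingHom.comp_apply]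
    split_ifs
    · rw [PowerSeries.X_dvd_iff, map_sub, constantCoeff_tTaylor, PowerSeries.constantCoeff_C,
        sub_self]
    · rw [uTaylor_X_of_notMem hiT, sub_self]
      exact dvd_zero _

theorem factorial_smul_coeff_coeff_det_taylorBlockMatrix (T J K : Finset (Fin s)) (a b : ℕ) :
    ((a.factorial * b.factorial : ℕ) : ℤ) •
        PowerSeries.coeff b (PowerSeries.coeff a (taylorBlockMatrix T J K).det) =
      ∑ I ∈ (powersetCard #K Tᶜ).filter (fun I => J ⊆ I),
        epsSign s I K •
          ((⇑(dFull s))^[a] (minorA s I K) * (⇑(dRowSet s T))^[b] (minorA s Iᶜ Kᶜ)) := by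
  simp only [det_taylorBlockMatrix, map_sum, map_zsmul, coeff_coeff_tTaylor_mul_uTaylor, smul_sum]
  refine sum_congr rfl fun I _ => ?_
  rw [dFull_eq_dRowSet_univ, ← factorial_smul_coeff_taylorRow, ← factorial_smul_coeff_taylorRow,
    smul_mul_smul_comm, smul_comm, Nat.cast_mul]

end TaylorBlockMatrix

theorem mixed_derivative_sum_in_minorIdeal_general (s a l : ℕ) (T J K : Finset (Fin s))
    (hJT : Disjoint J T)
    (g : PolyS s)
    (hg : ((a.factorial * (l - a).factorial : ℕ) : ℤ) • g =
      ∑ I ∈ (Finset.powersetCard K.card Tᶜ).filter (fun I => J ⊆ I),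
        epsSign s I K •
          ((⇑(dFull s))^[a] (minorA s I K) *
           (⇑(dRowSet s T))^[l - a] (minorA s Iᶜ Kᶜ))) :
    g ∈ minorIdealS s (s - J.card - T.card - a) := by
  have hcoeff : g = PowerSeries.coeff (l - a) (PowerSeries.coeff a (taylorBlockMatrix T J K).det) :=
    smul_right_injective (PolyS s)
      (Int.natCast_ne_zero.mpr (mul_ne_zero a.factorial_ne_zero (l - a).factorial_ne_zero))
      (hg.trans (factorial_smul_coeff_coeff_det_taylorBlockMatrix T J K a (l - a)).symm)
  rw [hcoeff]
  exact coeff_coeff_mem_of_mem_minorFiltration (det_taylorBlockMatrix_mem hJT K) a (l - a)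

/-- Lemma 6.2: for `T, J, K ⊆ S` with `J ∩ T = ∅` and `0 ≤ a ≤ l`,
`Σ_{|I|=|K|, J ⊆ I ⊆ S∖T} ε(I,K) ∂̄^a 𝒜(I,K) · ∂̄_T^{l−a} 𝒜(S∖I, S∖K)`
lies in `𝔯[s − |J| − |T| − a]` (stated in factorial-cleared form). -/
theorem mixed_derivative_sum_in_minorIdeal (s a l : ℕ) (T J K : Finset (Fin s))
    (hJT : Disjoint J T) (hal : a ≤ l)
    (g : PolyS s)
    (hg : ((a.factorial * (l - a).factorial : ℕ) : ℤ) • g =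
      ∑ I ∈ (Finset.powersetCard K.card Tᶜ).filter (fun I => J ⊆ I),
        epsSign s I K •
          ((⇑(dFull s))^[a] (minorA s I K) *
           (⇑(dRowSet s T))^[l - a] (minorA s Iᶜ Kᶜ))) :
    g ∈ minorIdealS s (s - J.card - T.card - a) :=
  mixed_derivative_sum_in_minorIdeal_general s a l T J K hJT g hg
end

section
/- Let G = GL_h(K) act on V = (K^h)^{⊕p} ⊕ ((K^h)^*)^{⊕q}, K algebraically closed. Suppose p, q ≥ h, let Δ be the image under Q_h^K of the h-minor (h,…,1 | 1,…,h), i.e., Δ = det(Σ_l a_{il}^{(0)} b_{jl}^{(0)})_{1 ≤ i,j ≤ h}, and let 𝔅^K_Δ, 𝔠^K_Δ be localizations at Δ of the coordinate ring 𝔅^K of J_∞(V) and of the subring 𝔠^K generated by all X_{ij}^{(k)} = ∂̄^k Σ_l a_{il}^{(0)} b_{jl}^{(0)}. Then the ring of J_∞(GL_h(K))-invariants of 𝔅^K_Δ equals 𝔠^K_Δ. -/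
/-!
On the locus `Δ ≠ 0` the arc space splits as `J_∞(GL_h) × (slice)`. Concretely, write an arc
point as matrices `α` (`p × h`) and `β` (`q × h`) over `A[[t]]`, so that `g` acts by
`(α, β) ↦ (α gᵀ, β g⁻¹)` and the pairing `P = α βᵀ` is invariant; its entries are the
generating series of the `X_{ij}^{(k)}`, and `Δ` is the constant term of the determinant of the
top-left `h × h` block `N` of `P`. This gives the inclusion `𝔠^K_Δ ⊆ invariants`.

Conversely, if `N` is invertible then so is the top `h × h` block `M` of `α`, and `g = (Mᵀ)⁻¹`
moves `(α, β)` to `(P_{·,≤h} N⁻¹, (P_{≤h,·})ᵀ)`, whose coordinates are power series with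
coefficients in `𝔠^K_Δ`, since `det N` has constant term `Δ`. Evaluating an invariant at the
universal point of `𝔅^K_Δ`, where evaluation is the identity, and at its translate by this `g`
therefore places it in `𝔠^K_Δ`.
-/

open MvPolynomial

/-- `𝔅^K = K[a_{il}^{(k)}, b_{jl}^{(k)}]`, the coordinate ring of `J_∞(V)` for
`V = W^{⊕p} ⊕ (W^*)^{⊕q}`, `W = K^h`. -/
abbrev BK (K : Type) [Field K] (p q h : ℕ) :=
  MvPolynomial ((Fin p × Fin h × ℕ) ⊕ (Fin q × Fin h × ℕ)) K

/-- `X_{ij}^{(k)} = ∂̄^k Σ_{l=1}^h a_{il}^{(0)} b_{jl}^{(0)}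
  = Σ_l Σ_{k₁+k₂=k} a_{il}^{(k₁)} b_{jl}^{(k₂)}`. -/
noncomputable def XgenK (K : Type) [Field K] (p q h : ℕ)
    (i : Fin p) (j : Fin q) (k : ℕ) : BK K p q h :=
  ∑ l : Fin h, ∑ m ∈ Finset.HasAntidiagonal.antidiagonal k,
    X (.inl (i, l, m.1)) * X (.inr (j, l, m.2))

/-- Evaluation of `𝔅^K` at an `A[[t]]`-point of `V`, i.e. at an `A`-point of the arc
space `J_∞(V)`: the variable `a_{il}^{(k)}` goes to the `t^k`-coefficient of the arc
`α(i,l)`, and similarly for `b`. -/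
noncomputable def evalArc {K : Type} [Field K] {p q h : ℕ}
    {A : Type} [CommRing A] [Algebra K A]
    (α : Fin p × Fin h → PowerSeries A) (β : Fin q × Fin h → PowerSeries A) :
    BK K p q h →ₐ[K] A :=
  aeval (Sum.elim
    (fun v => PowerSeries.coeff (R := A) v.2.2 (α (v.1, v.2.1)))
    (fun v => PowerSeries.coeff (R := A) v.2.2 (β (v.1, v.2.1))))

/-- The action of `g ∈ J_∞(GL_h)(A) = GL_h(A[[t]])` on the `W`-components. -/
noncomputable def actA {p h : ℕ} {A : Type} [CommRing A]
    (g : GL (Fin h) (PowerSeries A)) (α : Fin p × Fin h → PowerSeries A) :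
    Fin p × Fin h → PowerSeries A :=
  fun v => ∑ m : Fin h, (g : Matrix (Fin h) (Fin h) (PowerSeries A)) v.2 m * α (v.1, m)

/-- The action of `g ∈ GL_h(A[[t]])` on the `W^*`-components (dual action). -/
noncomputable def actB {q h : ℕ} {A : Type} [CommRing A]
    (g : GL (Fin h) (PowerSeries A)) (β : Fin q × Fin h → PowerSeries A) :
    Fin q × Fin h → PowerSeries A :=
  fun v => ∑ m : Fin h, β (v.1, m) * ((g⁻¹ : GL (Fin h) (PowerSeries A)) :
    Matrix (Fin h) (Fin h) (PowerSeries A)) m v.2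

/-- `f ∈ 𝔅^K` is invariant under the arc group `J_∞(GL_h(K))`: for every `K`-algebra
`A`, every `g ∈ GL_h(A[[t]])` and every `A`-point of `J_∞(V)`, evaluating `f` at the
translated point gives the same result. -/
def IsArcInvariant (K : Type) [Field K] (p q h : ℕ) (f : BK K p q h) : Prop :=
  ∀ (A : Type) [CommRing A] [Algebra K A]
    (g : GL (Fin h) (PowerSeries A))
    (α : Fin p × Fin h → PowerSeries A) (β : Fin q × Fin h → PowerSeries A),
    evalArc (K := K) (actA g α) (actB g β) f = evalArc (K := K) α β f

/-- `Δ = det(X_{ij}^{(0)})_{1 ≤ i,j ≤ h}`, the image under `Q_h^K` of the `h`-minor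
`(h,…,1 | 1,…,h)` (defined when `p, q ≥ h`). -/
noncomputable def DeltaK (K : Type) [Field K] (p q h : ℕ) (hp : h ≤ p) (hq : h ≤ q) :
    BK K p q h :=
  (Matrix.of fun i j : Fin h =>
    XgenK K p q h (Fin.castLE hp i) (Fin.castLE hq j) 0).det

namespace IsLocalization.Away

variable {R S T : Type*} [CommSemiring R] [CommSemiring S] [Algebra R S] [CommSemiring T]
  (r : R) [IsLocalization.Away r S] {g : R →+* T}

theorem lift_invSelf (hg : IsUnit (g r)) : lift r hg (invSelf r : S) = ↑hg.unit⁻¹ := by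
  refine (Units.inv_eq_of_mul_eq_one_right ?_).symm
  rw [IsUnit.unit_spec, ← lift_eq (S := S) r hg r, ← map_mul, mul_invSelf, map_one]

theorem lift_mem {σ : Type*} [SetLike σ T] [SubmonoidClass σ T] {C : σ} (hg : IsUnit (g r))
    (hgC : ∀ a, g a ∈ C) {t : T} (ht : g r * t = 1) (htC : t ∈ C) (x : S) :
    lift r hg x ∈ C := by
  obtain ⟨n, a, hx⟩ := surj r x
  have hlift : lift r hg x = g a * t ^ n :=
    calc lift r hg x = lift r hg x * (g r * t) ^ n := by rw [ht, one_pow, mul_one]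
      _ = lift r hg (x * algebraMap R S r ^ n) * t ^ n := by
        rw [map_mul, map_pow, lift_eq, mul_pow, mul_assoc]
      _ = g a * t ^ n := by rw [hx, lift_eq]
  rw [hlift]
  exact mul_mem (hgC a) (pow_mem htC n)

end IsLocalization.Away

namespace Matrix

variable {R : Type*} [CommRing R] {m n k : Type*} [Fintype k] [DecidableEq k]

theorem map_nonsing_inv {S : Type*} [CommRing S] (f : R →+* S) (N : Matrix k k R)
    (hN : IsUnit N.det) : (N.map f)⁻¹ = N⁻¹.map f :=
  inv_eq_right_inv <| by
    rw [← Matrix.map_mul, mul_nonsing_inv _ hN, Matrix.map_one f f.map_zero f.map_one]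

theorem exists_GL_of_isUnit_det_submatrix (α : Matrix m k R) (β : Matrix n k R)
    (e : k → m) (f : k → n) (hN : IsUnit ((α * βᵀ).submatrix e f).det) :
    ∃ g : GL k R, α * (g : Matrix k k R)ᵀ = (α * βᵀ).submatrix id f * ((α * βᵀ).submatrix e f)⁻¹ ∧
      β * ((g⁻¹ : GL k R) : Matrix k k R) = ((α * βᵀ).submatrix e id)ᵀ := by
  set M := α.submatrix e id
  have hrows : (α * βᵀ).submatrix e id = M * βᵀ := by ext; simp [M, mul_apply]
  have hcols : (α * βᵀ).submatrix id f = α * (β.submatrix f id)ᵀ := by ext; simp [mul_apply]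
  have hN' : (α * βᵀ).submatrix e f = M * (β.submatrix f id)ᵀ := by ext; simp [M, mul_apply]
  have hM : IsUnit M.det := isUnit_of_mul_isUnit_left (by rwa [hN', det_mul] at hN)
  let u := ((isUnit_iff_isUnit_det Mᵀ).mpr (by rwa [det_transpose])).unit
  refine ⟨u⁻¹, ?_, ?_⟩
  · rw [coe_units_inv, IsUnit.unit_spec, transpose_nonsing_inv, transpose_transpose, hcols]
    calc α * M⁻¹ = α * M⁻¹ * (α * βᵀ).submatrix e f * ((α * βᵀ).submatrix e f)⁻¹ :=
          (mul_nonsing_inv_cancel_right _ _ hN).symm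
      _ = α * (β.submatrix f id)ᵀ * ((α * βᵀ).submatrix e f)⁻¹ := by
          rw [hN', ← Matrix.mul_assoc, nonsing_inv_mul_cancel_right _ _ hM]
  · rw [inv_inv, IsUnit.unit_spec, hrows, transpose_mul, transpose_transpose]

end Matrix

section ArcMatrix

open scoped Matrix

variable {A : Type} [CommRing A] {p q h : ℕ}

def arcMatrix {R : Type*} {n : ℕ} (α : Fin n × Fin h → R) : Matrix (Fin n) (Fin h) R :=
  Matrix.of (Function.curry α)

theorem arcMatrix_actA (g : GL (Fin h) (PowerSeries A)) (α : Fin p × Fin h → PowerSeries A) :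
    arcMatrix (actA g α) = arcMatrix α * (g : Matrix (Fin h) (Fin h) (PowerSeries A))ᵀ := by
  ext i l
  simp [arcMatrix, actA, Matrix.mul_apply, mul_comm]

theorem arcMatrix_actB (g : GL (Fin h) (PowerSeries A)) (β : Fin q × Fin h → PowerSeries A) :
    arcMatrix (actB g β) =
      arcMatrix β *
        ((g⁻¹ : GL (Fin h) (PowerSeries A)) : Matrix (Fin h) (Fin h) (PowerSeries A)) := by
  ext j l
  simp [arcMatrix, actB, Matrix.mul_apply]

noncomputable def pairing (α : Fin p × Fin h → PowerSeries A)
    (β : Fin q × Fin h → PowerSeries A) : Matrix (Fin p) (Fin q) (PowerSeries A) :=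
  arcMatrix α * (arcMatrix β)ᵀ

theorem pairing_actA_actB (g : GL (Fin h) (PowerSeries A)) (α : Fin p × Fin h → PowerSeries A)
    (β : Fin q × Fin h → PowerSeries A) : pairing (actA g α) (actB g β) = pairing α β := by
  rw [pairing, pairing, arcMatrix_actA, arcMatrix_actB, Matrix.transpose_mul, Matrix.mul_assoc,
    ← Matrix.mul_assoc _ _ (arcMatrix β)ᵀ, ← Matrix.transpose_mul, Units.inv_mul,
    Matrix.transpose_one, Matrix.one_mul]

variable {K : Type} [Field K] [Algebra K A]

theorem evalArc_XgenK (α : Fin p × Fin h → PowerSeries A) (β : Fin q × Fin h → PowerSeries A)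
    (i : Fin p) (j : Fin q) (k : ℕ) :
    evalArc (K := K) α β (XgenK K p q h i j k) = PowerSeries.coeff k (pairing α β i j) := by
  simp [XgenK, evalArc, pairing, arcMatrix, Matrix.mul_apply, PowerSeries.coeff_mul]

theorem evalArc_DeltaK (α : Fin p × Fin h → PowerSeries A) (β : Fin q × Fin h → PowerSeries A)
    (hp : h ≤ p) (hq : h ≤ q) :
    evalArc (K := K) α β (DeltaK K p q h hp hq) =
      PowerSeries.constantCoeff ((pairing α β).submatrix (Fin.castLE hp) (Fin.castLE hq)).det := by
  rw [DeltaK, AlgHom.map_det, RingHom.map_det]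
  congr 1
  ext i j
  simp [evalArc_XgenK, PowerSeries.coeff_zero_eq_constantCoeff_apply]

theorem evalArc_actA_actB_XgenK (g : GL (Fin h) (PowerSeries A))
    (α : Fin p × Fin h → PowerSeries A) (β : Fin q × Fin h → PowerSeries A)
    (i : Fin p) (j : Fin q) (k : ℕ) :
    evalArc (K := K) (actA g α) (actB g β) (XgenK K p q h i j k) =
      evalArc (K := K) α β (XgenK K p q h i j k) := by
  rw [evalArc_XgenK, evalArc_XgenK, pairing_actA_actB]

theorem evalArc_actA_actB_DeltaK (g : GL (Fin h) (PowerSeries A))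
    (α : Fin p × Fin h → PowerSeries A) (β : Fin q × Fin h → PowerSeries A)
    (hp : h ≤ p) (hq : h ≤ q) :
    evalArc (K := K) (actA g α) (actB g β) (DeltaK K p q h hp hq) =
      evalArc (K := K) α β (DeltaK K p q h hp hq) := by
  rw [evalArc_DeltaK, evalArc_DeltaK, pairing_actA_actB]

theorem evalArc_map {B : Type} [CommRing B] [Algebra K B] (ψ : B →ₐ[K] A)
    (α : Fin p × Fin h → PowerSeries B) (β : Fin q × Fin h → PowerSeries B) (f : BK K p q h) :
    evalArc (K := K) (fun v => PowerSeries.map (ψ : B →+* A) (α v))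
      (fun v => PowerSeries.map (ψ : B →+* A) (β v)) f = ψ (evalArc (K := K) α β f) := by
  rw [evalArc, evalArc, ← AlgHom.comp_apply, MvPolynomial.comp_aeval]
  congr 2
  funext v
  cases v <;> simp

theorem exists_arcMatrix_actA_actB_eq (α : Fin p × Fin h → PowerSeries A)
    (β : Fin q × Fin h → PowerSeries A) (e : Fin h → Fin p) (f : Fin h → Fin q)
    (hN : IsUnit ((pairing α β).submatrix e f).det) :
    ∃ g : GL (Fin h) (PowerSeries A),
      arcMatrix (actA g α) = (pairing α β).submatrix id f * ((pairing α β).submatrix e f)⁻¹ ∧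
      arcMatrix (actB g β) = ((pairing α β).submatrix e id)ᵀ := by
  simpa only [arcMatrix_actA, arcMatrix_actB, pairing] using
    Matrix.exists_GL_of_isUnit_det_submatrix (arcMatrix α) (arcMatrix β) e f hN

end ArcMatrix

section UniversalArc

variable (K : Type) [Field K] (p q h : ℕ) (L : Type) [CommRing L] [Algebra K L]
  [Algebra (BK K p q h) L] [IsScalarTower K (BK K p q h) L]

noncomputable def universalArcA : Fin p × Fin h → PowerSeries L :=
  fun v => PowerSeries.mk fun k => algebraMap (BK K p q h) L (X (.inl (v.1, v.2, k)))

noncomputable def universalArcB : Fin q × Fin h → PowerSeries L :=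
  fun v => PowerSeries.mk fun k => algebraMap (BK K p q h) L (X (.inr (v.1, v.2, k)))

theorem evalArc_universalArc (f : BK K p q h) :
    evalArc (K := K) (universalArcA K p q h L) (universalArcB K p q h L) f =
      algebraMap (BK K p q h) L f := by
  rw [← IsScalarTower.coe_toAlgHom' K]
  congr 1
  refine MvPolynomial.algHom_ext fun v => ?_
  cases v <;> simp [evalArc, universalArcA, universalArcB]

end UniversalArc

section LocalizedInvariants

open IsLocalization.Away

variable (K : Type) [Field K] (p q h : ℕ) (hp : h ≤ p) (hq : h ≤ q)

local notation "𝔅Δ" => Localization.Away (DeltaK K p q h hp hq)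

/-- `𝔠^K_Δ` -/
noncomputable def cKDelta : Subalgebra K 𝔅Δ :=
  Algebra.adjoin K
    ((algebraMap (BK K p q h) 𝔅Δ) ''
        (Set.range fun t : Fin p × Fin q × ℕ => XgenK K p q h t.1 t.2.1 t.2.2) ∪
      {invSelf (S := 𝔅Δ) (DeltaK K p q h hp hq)})

def IsLocalizedArcInvariant (x : 𝔅Δ) : Prop :=
  ∀ (A : Type) [CommRing A] [Algebra K A]
    (g : GL (Fin h) (PowerSeries A))
    (α : Fin p × Fin h → PowerSeries A) (β : Fin q × Fin h → PowerSeries A)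
    (hu : IsUnit ((evalArc (K := K) α β).toRingHom (DeltaK K p q h hp hq)))
    (hu' : IsUnit ((evalArc (K := K) (actA g α) (actB g β)).toRingHom
      (DeltaK K p q h hp hq))),
    lift (S := 𝔅Δ) (DeltaK K p q h hp hq) hu' x = lift (S := 𝔅Δ) (DeltaK K p q h hp hq) hu x

noncomputable def universalPairing : Matrix (Fin p) (Fin q) (PowerSeries (cKDelta K p q h hp hq)) :=
  Matrix.of fun i j => PowerSeries.mk fun k =>
    ⟨algebraMap _ _ (XgenK K p q h i j k),
      Algebra.subset_adjoin (Or.inl ⟨_, ⟨(i, j, k), rfl⟩, rfl⟩)⟩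

theorem map_universalPairing :
    (universalPairing K p q h hp hq).map (PowerSeries.map (cKDelta K p q h hp hq).val) =
      pairing (universalArcA K p q h 𝔅Δ) (universalArcB K p q h 𝔅Δ) := by
  ext i j k
  rw [← evalArc_XgenK (K := K), evalArc_universalArc]
  simp [universalPairing]

theorem isUnit_det_universalPairing :
    IsUnit ((universalPairing K p q h hp hq).submatrix (Fin.castLE hp) (Fin.castLE hq)).det := by
  rw [PowerSeries.isUnit_iff_constantCoeff]
  refine IsUnit.of_mul_eq_one
    (⟨invSelf (DeltaK K p q h hp hq), Algebra.subset_adjoin (Or.inr rfl)⟩ : cKDelta K p q h hp hq)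
    (Subtype.ext ?_)
  have hconst : ((PowerSeries.constantCoeff ((universalPairing K p q h hp hq).submatrix
      (Fin.castLE hp) (Fin.castLE hq)).det : cKDelta K p q h hp hq) : 𝔅Δ) =
      algebraMap _ _ (DeltaK K p q h hp hq) := by
    rw [← evalArc_universalArc K p q h, evalArc_DeltaK, ← map_universalPairing,
      Matrix.submatrix_map, ← RingHom.mapMatrix_apply, ← RingHom.map_det]
    rfl
  simp [hconst]

variable {K p q h hp hq}

theorem isLocalizedArcInvariant_of_mem_cKDelta {x : 𝔅Δ} (hx : x ∈ cKDelta K p q h hp hq) :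
    IsLocalizedArcInvariant K p q h hp hq x := by
  intro A _ _ g α β hu hu'
  suffices cKDelta K p q h hp hq ≤ AlgHom.equalizer (liftAlgHom _ hu') (liftAlgHom _ hu) from
    this hx
  refine Algebra.adjoin_le ?_
  rintro _ (⟨_, ⟨⟨i, j, k⟩, rfl⟩, rfl⟩ | rfl)
  · show lift _ hu' (algebraMap _ _ _) = lift _ hu (algebraMap _ _ _)
    rw [lift_eq, lift_eq]
    exact evalArc_actA_actB_XgenK g α β i j k
  · show lift _ hu' (invSelf _) = lift _ hu (invSelf _)
    rw [lift_invSelf, lift_invSelf]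
    congr 2
    exact Units.ext (evalArc_actA_actB_DeltaK g α β hp hq)

theorem exists_evalArc_actA_actB_universalArc_mem :
    ∃ g : GL (Fin h) (PowerSeries 𝔅Δ), ∀ f : BK K p q h,
      evalArc (K := K) (actA g (universalArcA K p q h 𝔅Δ)) (actB g (universalArcB K p q h 𝔅Δ)) f ∈
        cKDelta K p q h hp hq := by
  have hP := map_universalPairing K p q h hp hq
  have hN := isUnit_det_universalPairing K p q h hp hq
  obtain ⟨g, hα, hβ⟩ := exists_arcMatrix_actA_actB_eq _ _ (Fin.castLE hp) (Fin.castLE hq) (by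
    rw [← hP, Matrix.submatrix_map, ← RingHom.mapMatrix_apply, ← RingHom.map_det]
    exact hN.map _)
  rw [← hP, Matrix.submatrix_map, Matrix.submatrix_map, Matrix.map_nonsing_inv _ _ hN,
    ← Matrix.map_mul] at hα
  rw [← hP] at hβ
  refine ⟨g, fun f => ?_⟩
  have hlift : evalArc (K := K) (actA g (universalArcA K p q h 𝔅Δ))
      (actB g (universalArcB K p q h 𝔅Δ)) f = (cKDelta K p q h hp hq).val
      (evalArc (K := K)
        (fun v => ((universalPairing K p q h hp hq).submatrix id (Fin.castLE hq) *
          ((universalPairing K p q h hp hq).submatrix (Fin.castLE hp) (Fin.castLE hq))⁻¹) v.1 v.2)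
        (fun v => (universalPairing K p q h hp hq) (Fin.castLE hp v.2) v.1) f) := by
    rw [← evalArc_map]
    congr 2 <;> funext v
    exacts [congrFun₂ hα v.1 v.2, congrFun₂ hβ v.1 v.2]
  rw [hlift]
  exact SetLike.coe_mem _

theorem mem_cKDelta_of_isLocalizedArcInvariant {x : 𝔅Δ}
    (hx : IsLocalizedArcInvariant K p q h hp hq x) : x ∈ cKDelta K p q h hp hq := by
  obtain ⟨g, hg⟩ := exists_evalArc_actA_actB_universalArc_mem (K := K) (hp := hp) (hq := hq)
  have hΔ : evalArc (K := K) (actA g (universalArcA K p q h 𝔅Δ))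
      (actB g (universalArcB K p q h 𝔅Δ)) (DeltaK K p q h hp hq) =
      algebraMap _ _ (DeltaK K p q h hp hq) := by
    rw [evalArc_actA_actB_DeltaK, evalArc_universalArc]
  have hu : IsUnit ((evalArc (K := K) (universalArcA K p q h 𝔅Δ)
      (universalArcB K p q h 𝔅Δ)).toRingHom (DeltaK K p q h hp hq)) := by
    rw [AlgHom.toRingHom_eq_coe, RingHom.coe_coe, evalArc_universalArc]
    exact algebraMap_isUnit _
  have hu' : IsUnit ((evalArc (K := K) (actA g (universalArcA K p q h 𝔅Δ))
      (actB g (universalArcB K p q h 𝔅Δ))).toRingHom (DeltaK K p q h hp hq)) := by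
    rw [AlgHom.toRingHom_eq_coe, RingHom.coe_coe, hΔ]
    exact algebraMap_isUnit _
  have hid : lift _ hu x = x := by
    rw [IsLocalization.ringHom_ext (Submonoid.powers (DeltaK K p q h hp hq))
      (j := lift _ hu) (k := RingHom.id _) (RingHom.ext fun a => by simp [evalArc_universalArc])]
    rfl
  rw [← hid, ← hx _ g _ _ hu hu']
  exact lift_mem _ hu' hg
    (by rw [AlgHom.toRingHom_eq_coe, RingHom.coe_coe, hΔ]; exact mul_invSelf _)
    (Algebra.subset_adjoin (Or.inr rfl)) x

end LocalizedInvariants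

theorem localized_arc_invariants_GL_general (K : Type) [Field K]
    (p q h : ℕ) (hp : h ≤ p) (hq : h ≤ q) :
    {x : Localization.Away (DeltaK K p q h hp hq) |
      ∀ (A : Type) [CommRing A] [Algebra K A]
        (g : GL (Fin h) (PowerSeries A))
        (α : Fin p × Fin h → PowerSeries A) (β : Fin q × Fin h → PowerSeries A)
        (hu : IsUnit ((evalArc (K := K) α β).toRingHom (DeltaK K p q h hp hq)))
        (hu' : IsUnit ((evalArc (K := K) (actA g α) (actB g β)).toRingHom
          (DeltaK K p q h hp hq))),
        IsLocalization.Away.lift (S := Localization.Away (DeltaK K p q h hp hq))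
            (DeltaK K p q h hp hq) hu' x =
        IsLocalization.Away.lift (S := Localization.Away (DeltaK K p q h hp hq))
            (DeltaK K p q h hp hq) hu x} =
    ↑(Algebra.adjoin K
        ((algebraMap (BK K p q h) (Localization.Away (DeltaK K p q h hp hq))) ''
            (Set.range fun t : Fin p × Fin q × ℕ => XgenK K p q h t.1 t.2.1 t.2.2) ∪
          {IsLocalization.Away.invSelf (S := Localization.Away (DeltaK K p q h hp hq))
            (DeltaK K p q h hp hq)})) :=
  Set.ext fun _ =>
    ⟨mem_cKDelta_of_isLocalizedArcInvariant, isLocalizedArcInvariant_of_mem_cKDelta⟩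

/-- For `p, q ≥ h`, the invariant ring of the localization `𝔅^K_Δ` under
`J_∞(GL_h(K))` equals `𝔠^K_Δ`, the localization at `Δ` of the subring generated by
the `X_{ij}^{(k)}`.  Invariance is expressed through all `A`-points of the localized
arc space: points `(α, β)` at which `Δ` evaluates to a unit. -/
theorem localized_arc_invariants_GL (K : Type) [Field K] [IsAlgClosed K]
    (p q h : ℕ) (hp : h ≤ p) (hq : h ≤ q) :
    {x : Localization.Away (DeltaK K p q h hp hq) |
      ∀ (A : Type) [CommRing A] [Algebra K A]
        (g : GL (Fin h) (PowerSeries A))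
        (α : Fin p × Fin h → PowerSeries A) (β : Fin q × Fin h → PowerSeries A)
        (hu : IsUnit ((evalArc (K := K) α β).toRingHom (DeltaK K p q h hp hq)))
        (hu' : IsUnit ((evalArc (K := K) (actA g α) (actB g β)).toRingHom
          (DeltaK K p q h hp hq))),
        IsLocalization.Away.lift (S := Localization.Away (DeltaK K p q h hp hq))
            (DeltaK K p q h hp hq) hu' x =
        IsLocalization.Away.lift (S := Localization.Away (DeltaK K p q h hp hq))
            (DeltaK K p q h hp hq) hu x} =
    ↑(Algebra.adjoin K
        ((algebraMap (BK K p q h) (Localization.Away (DeltaK K p q h hp hq))) ''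
            (Set.range fun t : Fin p × Fin q × ℕ => XgenK K p q h t.1 t.2.1 t.2.2) ∪
          {IsLocalization.Away.invSelf (S := Localization.Away (DeltaK K p q h hp hq))
            (DeltaK K p q h hp hq)})) :=
  localized_arc_invariants_GL_general K p q h hp hq
end
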